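/- Let F be a field of characteristic zero, σ_t the F(x₁,…,x_m)-automorphism of F(t, x₁,…,x_m) with σ_t(t) = t+1, and f = a/b with a, b ∈ F[t, x₁, …, x_m], gcd(a,b) = 1. If there exists a nonzero operator L = Σ_{i=0}^ρ ℓ_i S_t^i with ℓ_i ∈ F(t), ℓ_ρ ≠ 0, such that Σ ℓ_i·σ_t^i(f) = 0, then b is split, i.e., b is a product of a polynomial in t and a polynomial in x₁,…,x_m. -/

import Mathlib

open Polynomial

/-- The natural embedding `F(t) → K(t)` induced by `F ⊆ K`. -/
noncomputable def liftRF {F K : Type*} [Field F] [Field K] [Algebra F K] :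
    RatFunc F →+* RatFunc K :=
  RatFunc.mapRingHom (Polynomial.mapRingHom (algebraMap F K)) (by
    intro q hq
    simp only [Submonoid.mem_comap, Polynomial.coe_mapRingHom]
    exact mem_nonZeroDivisors_of_ne_zero
      ((Polynomial.map_ne_zero_iff (algebraMap F K).injective).mpr
        (nonZeroDivisors.ne_zero hq)))

/-- The shift `σ_t^i` on `R[t]`, sending `q(t)` to `q(t + i)` (coefficients in `R` are
fixed, i.e. the `x`-variables are fixed). -/
noncomputable def shiftPolyN {R : Type*} [CommRing R] (i : ℕ) (q : Polynomial R) :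
    Polynomial R :=
  q.comp (X + C (i : R))

/-- The embedding of `F[t, x₁, …, x_m] = (F[x])[t]` into `F(t, x₁, …, x_m) = K(t)`,
where `K = F(x₁, …, x_m)`. -/
noncomputable def polyToRF {F : Type*} [Field F] (m : ℕ)
    (u : Polynomial (MvPolynomial (Fin m) F)) :
    RatFunc (FractionRing (MvPolynomial (Fin m) F)) :=
  algebraMap (Polynomial (FractionRing (MvPolynomial (Fin m) F))) _
    (u.map (algebraMap (MvPolynomial (Fin m) F) (FractionRing (MvPolynomial (Fin m) F))))

/-!
Put `K = F(x₁, …, x_m)`, so that `a` and `b` stay coprime in `K[t]`. It suffices that every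
irreducible factor `p` of `b` in `K[t]` divides a nonzero polynomial of `F[t]`: then so does `b`,
Gauss's lemma makes the primitive part of `b` a factor of that polynomial in `F[x][t]`, and a
factor of a polynomial in `t` alone lies in `F[t]`.

If `p` divides no nonzero polynomial of `F[t]`, neither does any integer shift of `p`. Only
finitely many shifts `σ_t^c p` divide `b`; take the largest such `c` and put `P = σ_t^(c+ρ) p`.
For the `P`-adic valuation of `K(t)` every nonzero `ℓ_i` is a unit and `σ_t^i f` is integral for
`i < ρ` by maximality of `c`, whereas `σ_t^ρ f` has a pole since `P ∣ σ_t^ρ b` and `P ∤ σ_t^ρ a`.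
Hence `Σ ℓ_i σ_t^i f` has a pole and cannot vanish.
-/

open IsDedekindDomain

theorem taylor_dvd_taylor_iff {R : Type*} [CommRing R] {p q : R[X]} (a b : R) :
    taylor a p ∣ taylor b q ↔ taylor (a - b) p ∣ q := by
  have hsplit : taylor a p = taylor b (taylor (a - b) p) := by
    rw [taylor_taylor, add_sub_cancel]
  rw [hsplit]
  refine ⟨fun h => ?_, map_dvd (taylorAlgHom b)⟩
  simpa [taylor_taylor, sub_eq_neg_add] using map_dvd (taylorAlgHom (-b)) h

theorem Irreducible.taylor {R : Type*} [CommRing R] {p : R[X]} (hp : Irreducible p) (r : R) :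
    Irreducible (taylor r p) :=
  hp.map (taylorEquiv r)

theorem finite_setOf_taylor_intCast_dvd {K : Type*} [Field K] [CharZero K] {p B : K[X]}
    (hp : 0 < p.degree) (hB : B ≠ 0) : {c : ℤ | taylor (c : K) p ∣ B}.Finite := by
  let L := AlgebraicClosure K
  obtain ⟨α, hα⟩ := IsAlgClosed.exists_aeval_eq_zero L p hp.ne'
  have hroot : ∀ c ∈ {c : ℤ | taylor (c : K) p ∣ B}, (B.map (algebraMap K L)).IsRoot (α - c) := by
    intro c hc
    refine eval_eq_zero_of_dvd_of_eval_eq_zero (map_dvd (mapRingHom (algebraMap K L)) hc) ?_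
    simpa [taylor_eval, aeval_def, eval_map] using hα
  have hinj : Set.InjOn (fun c : ℤ => α - c) {c : ℤ | taylor (c : K) p ∣ B} :=
    fun c _ d _ h => by simpa using h
  exact Set.Finite.of_finite_image
    ((finite_setOfPred_isRoot (map_ne_zero hB)).subset (Set.image_subset_iff.mpr hroot)) hinj

section DividesNonzeroMap

variable {F K : Type*} [Field F] [Field K] [Algebra F K]

variable (F) in
def DividesNonzeroMap (p : K[X]) : Prop :=
  ∃ w : F[X], w ≠ 0 ∧ p ∣ w.map (algebraMap F K)

theorem DividesNonzeroMap.mul {p q : K[X]} (hp : DividesNonzeroMap F p)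
    (hq : DividesNonzeroMap F q) : DividesNonzeroMap F (p * q) := by
  obtain ⟨w, hw, hpw⟩ := hp
  obtain ⟨w', hw', hqw'⟩ := hq
  exact ⟨w * w', mul_ne_zero hw hw', by simpa using mul_dvd_mul hpw hqw'⟩

theorem DividesNonzeroMap.of_taylor_intCast {p : K[X]} (c : ℤ)
    (h : DividesNonzeroMap F (taylor (c : K) p)) : DividesNonzeroMap F p := by
  obtain ⟨w, hw, hdvd⟩ := h
  refine ⟨taylor (-c : F) w, by rwa [Ne, taylor_eq_zero], ?_⟩
  simpa [taylor_taylor] using map_dvd (taylorAlgHom (-c : K)) hdvd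

theorem dividesNonzeroMap_of_forall_irreducible {B : K[X]} (hB : B ≠ 0)
    (h : ∀ p, Irreducible p → p ∣ B → DividesNonzeroMap F p) : DividesNonzeroMap F B := by
  suffices ∀ q, q ∣ B → DividesNonzeroMap F q from this B dvd_rfl
  intro q
  induction q using UniqueFactorizationMonoid.induction_on_prime with
  | h₁ => exact fun h0 => absurd (zero_dvd_iff.mp h0) hB
  | h₂ u hu => exact fun _ => ⟨1, one_ne_zero, by simpa using hu.dvd⟩
  | h₃ q p _ hp ih =>
    exact fun hpq => (h p hp.irreducible (dvd_of_mul_right_dvd hpq)).mul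
      (ih (dvd_of_mul_left_dvd hpq))

theorem liftRF_eq_div (r : RatFunc F) :
    liftRF r = algebraMap K[X] (RatFunc K) (r.num.map (algebraMap F K)) /
      algebraMap K[X] (RatFunc K) (r.denom.map (algebraMap F K)) := by
  conv_lhs => rw [← RatFunc.num_div_denom r]
  rw [liftRF, RatFunc.coe_mapRingHom_eq_coe_map, RatFunc.map_apply_div]
  simp [Polynomial.coe_mapRingHom]

noncomputable def heightOneSpectrumOfIrreducible {P : K[X]} (hP : Irreducible P) :
    HeightOneSpectrum K[X] where
  asIdeal := Ideal.span {P}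
  isPrime := (Ideal.span_singleton_prime hP.ne_zero).mpr hP.prime
  ne_bot := by simpa using hP.ne_zero

theorem mem_heightOneSpectrumOfIrreducible_iff {P : K[X]} (hP : Irreducible P) {r : K[X]} :
    r ∈ (heightOneSpectrumOfIrreducible hP).asIdeal ↔ P ∣ r :=
  Ideal.mem_span_singleton

theorem valuation_liftRF_eq_one {P : K[X]} (hP : Irreducible P) (hPF : ¬DividesNonzeroMap F P)
    {r : RatFunc F} (hr : r ≠ 0) :
    (heightOneSpectrumOfIrreducible hP).valuation (RatFunc K) (liftRF r) = 1 := by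
  have hv : ∀ w : F[X], w ≠ 0 → (heightOneSpectrumOfIrreducible hP).valuation (RatFunc K)
      (algebraMap K[X] (RatFunc K) (w.map (algebraMap F K))) = 1 := fun w hw => by
    rw [HeightOneSpectrum.valuation_eq_one_iff_notMem, mem_heightOneSpectrumOfIrreducible_iff]
    exact fun hdvd => hPF ⟨w, hw, hdvd⟩
  rw [liftRF_eq_div, map_div₀, hv _ (RatFunc.num_ne_zero hr), hv _ r.denom_ne_zero, div_one]

theorem valuation_liftRF_le_one {P : K[X]} (hP : Irreducible P) (hPF : ¬DividesNonzeroMap F P)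
    (r : RatFunc F) :
    (heightOneSpectrumOfIrreducible hP).valuation (RatFunc K) (liftRF r) ≤ 1 := by
  rcases eq_or_ne r 0 with rfl | hr
  · simp
  · exact (valuation_liftRF_eq_one hP hPF hr).le

theorem sum_liftRF_mul_div_ne_zero {P : K[X]} (hP : Irreducible P) (hPF : ¬DividesNonzeroMap F P)
    {ρ : ℕ} {ℓ : ℕ → RatFunc F} (hρ : ℓ ρ ≠ 0) {A B : ℕ → K[X]}
    (hAρ : ¬P ∣ A ρ) (hBρ : P ∣ B ρ) (hBρ0 : B ρ ≠ 0) (hB : ∀ j < ρ, ¬P ∣ B j) :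
    ∑ i ∈ Finset.range (ρ + 1), liftRF (ℓ i) *
      (algebraMap K[X] (RatFunc K) (A i) / algebraMap K[X] (RatFunc K) (B i)) ≠ 0 := by
  set v := heightOneSpectrumOfIrreducible hP
  have hmem : ∀ r : K[X], r ∈ v.asIdeal ↔ P ∣ r := fun r =>
    mem_heightOneSpectrumOfIrreducible_iff hP
  have hlow : v.valuation (RatFunc K) (∑ i ∈ Finset.range ρ, liftRF (ℓ i) *
      (algebraMap K[X] (RatFunc K) (A i) / algebraMap K[X] (RatFunc K) (B i))) ≤ 1 := by
    refine Valuation.map_sum_le _ fun i hi => ?_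
    have hBi := hB i (Finset.mem_range.mp hi)
    rw [map_mul]
    refine mul_le_one' (valuation_liftRF_le_one hP hPF _) ?_
    exact (v.valuation_div_le_one_iff (RatFunc K) _ (fun h => hBi (by simp [h]))
      (fun h => absurd ((hmem _).mp h) hBi)).mpr (fun h => hBi ((hmem _).mp h))
  have htop : 1 < v.valuation (RatFunc K) (liftRF (ℓ ρ) *
      (algebraMap K[X] (RatFunc K) (A ρ) / algebraMap K[X] (RatFunc K) (B ρ))) := by
    rw [map_mul, valuation_liftRF_eq_one hP hPF hρ, one_mul, ← not_le,
      v.valuation_div_le_one_iff (RatFunc K) _ hBρ0 (fun _ h => hAρ ((hmem _).mp h))]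
    exact not_not.mpr ((hmem _).mpr hBρ)
  rw [Finset.sum_range_succ, ← (v.valuation (RatFunc K)).ne_zero_iff,
    Valuation.map_add_eq_of_lt_right _ (hlow.trans_lt htop)]
  exact (zero_lt_one.trans htop).ne'

theorem dividesNonzeroMap_of_sum_liftRF_mul_taylor_div_eq_zero [CharZero K] {A B : K[X]}
    (hB : B ≠ 0) (hAB : IsRelPrime A B) {ρ : ℕ} {ℓ : ℕ → RatFunc F} (hρ : ℓ ρ ≠ 0)
    (hL : ∑ i ∈ Finset.range (ρ + 1), liftRF (ℓ i) *
      (algebraMap K[X] (RatFunc K) (taylor (i : K) A) /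
        algebraMap K[X] (RatFunc K) (taylor (i : K) B)) = 0) :
    DividesNonzeroMap F B := by
  refine dividesNonzeroMap_of_forall_irreducible hB fun p hp hpB => ?_
  by_contra hbad
  obtain ⟨c, hcB, hcmax⟩ := Set.exists_max_image _ id
    (finite_setOf_taylor_intCast_dvd (degree_pos_of_irreducible hp) hB) ⟨0, by simpa using hpB⟩
  have hshift : ∀ (j : ℕ) (q : K[X]),
      taylor ((c + ρ : ℤ) : K) p ∣ taylor (j : K) q ↔ taylor ((c + ρ - j : ℤ) : K) p ∣ q := by
    intro j q
    rw [taylor_dvd_taylor_iff]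
    push_cast
    rfl
  refine sum_liftRF_mul_div_ne_zero (hp.taylor ((c + ρ : ℤ) : K))
    (fun h => hbad (h.of_taylor_intCast (c + ρ))) hρ ?_ ?_ (by rwa [Ne, taylor_eq_zero]) ?_ hL
  · rw [hshift, add_sub_cancel_right]
    exact fun hcA => (hp.taylor _).not_isUnit (hAB hcA hcB)
  · rwa [hshift, add_sub_cancel_right]
  · intro j hj hdvd
    have := hcmax _ ((hshift j B).mp hdvd)
    simp only [id] at this
    omega

end DividesNonzeroMap

section GaussLemma

open scoped nonZeroDivisors

variable {R K : Type*} [CommRing R] [IsDomain R] [NormalizedGCDMonoid R] [Field K] [Algebra R K]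
  [IsFractionRing R K]

theorem exists_isPrimitive_associated_map {d : K[X]} (hd : d ≠ 0) :
    ∃ P : R[X], P.IsPrimitive ∧ Associated (P.map (algebraMap R K)) d := by
  set N := IsLocalization.integerNormalization R⁰ d
  obtain ⟨s, hs, hN⟩ := IsLocalization.integerNormalization_spec R⁰ d
  have hinj := IsFractionRing.injective R K
  have hN0 : N ≠ 0 := by
    rwa [Ne, IsFractionRing.integerNormalization_eq_zero_iff]
  have hcontent : IsUnit (C (algebraMap R K N.content)) :=
    isUnit_C.mpr (Ne.isUnit (by simpa [map_eq_zero_iff _ hinj, content_eq_zero_iff] using hN0))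
  have hs' : IsUnit (C (algebraMap R K s)) :=
    isUnit_C.mpr (Ne.isUnit (by simpa [map_eq_zero_iff _ hinj] using nonZeroDivisors.ne_zero hs))
  have hfactor : C (algebraMap R K N.content) * N.primPart.map (algebraMap R K) =
      C (algebraMap R K s) * d := by
    rw [← map_C, ← Polynomial.map_mul, ← N.eq_C_content_mul_primPart, hN, Algebra.smul_def,
      Polynomial.algebraMap_apply]
  refine ⟨N.primPart, N.isPrimitive_primPart, ?_⟩
  exact (associated_unit_mul_left _ _ hcontent).symm.trans
    (hfactor ▸ associated_unit_mul_left _ _ hs')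

theorem IsRelPrime.map_fractionRing {a b : R[X]} (hab : IsRelPrime a b) :
    IsRelPrime (a.map (algebraMap R K)) (b.map (algebraMap R K)) := by
  have hinj := IsFractionRing.injective R K
  intro d hda hdb
  rcases eq_or_ne d 0 with rfl | hd
  · rw [zero_dvd_iff, Polynomial.map_eq_zero_iff hinj] at hda hdb
    subst hda hdb
    exact absurd hab not_isRelPrime_zero_zero
  obtain ⟨P, hP, hPd⟩ := exists_isPrimitive_associated_map (R := R) hd
  have hPa := hP.dvd_of_fraction_map_dvd_fraction_map (hPd.dvd.trans hda)
  have hPb := hP.dvd_of_fraction_map_dvd_fraction_map (hPd.dvd.trans hdb)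
  exact hPd.isUnit ((hab hPa hPb).map (mapRingHom (algebraMap R K)))

end GaussLemma

theorem exists_eq_map_of_dvd_map {R σ : Type*} [CommRing R] [IsDomain R]
    {u : (MvPolynomial σ R)[X]} {W : R[X]} (hW : W ≠ 0)
    (h : u ∣ W.map (algebraMap R (MvPolynomial σ R))) :
    ∃ q : R[X], u = q.map (algebraMap R (MvPolynomial σ R)) := by
  -- Exchanging the roles of `t` and the variables `σ` turns `W` into a constant.
  let e := (MvPolynomial.optionEquivLeft R σ).symm.trans (MvPolynomial.optionEquivRight R σ)
  have he : ∀ q : R[X], e (q.map (algebraMap R (MvPolynomial σ R))) = MvPolynomial.C q := by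
    intro q
    induction q using Polynomial.induction_on' with
    | add p q hp hq => simp only [Polynomial.map_add, map_add, hp, hq]
    | monomial n r => simp [e, ← C_mul_X_pow_eq_monomial]
  obtain ⟨q, -, hq⟩ := (MvPolynomial.dvd_C_iff_exists hW).mp (he W ▸ map_dvd e h)
  exact ⟨q, e.injective (hq.trans (he q).symm)⟩

theorem polyToRF_shiftPolyN {F : Type*} [Field F] (m : ℕ) (i : ℕ)
    (u : Polynomial (MvPolynomial (Fin m) F)) :
    polyToRF m (shiftPolyN i u) = algebraMap _ (RatFunc (FractionRing (MvPolynomial (Fin m) F)))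
      (taylor (i : FractionRing (MvPolynomial (Fin m) F))
        (u.map (algebraMap _ (FractionRing (MvPolynomial (Fin m) F))))) := by
  rw [polyToRF, shiftPolyN, ← taylor_apply, map_taylor, map_natCast]

theorem St_separable_denom_split {F : Type*} [Field F] [CharZero F] (m : ℕ)
    (a b : Polynomial (MvPolynomial (Fin m) F)) (hb : b ≠ 0) (hab : IsRelPrime a b)
    (ρ : ℕ) (ℓ : ℕ → RatFunc F) (hρ : ℓ ρ ≠ 0)
    (hL : ∑ i ∈ Finset.range (ρ + 1), liftRF (ℓ i) *
      (polyToRF m (shiftPolyN i a) / polyToRF m (shiftPolyN i b)) = 0) :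
    ∃ (q : Polynomial F) (r : MvPolynomial (Fin m) F),
      b = Polynomial.C r * q.map (algebraMap F (MvPolynomial (Fin m) F)) := by
  let : NormalizedGCDMonoid (MvPolynomial (Fin m) F) := Classical.arbitrary _
  let K := FractionRing (MvPolynomial (Fin m) F)
  simp only [polyToRF_shiftPolyN] at hL
  obtain ⟨W, hW, hbW⟩ := dividesNonzeroMap_of_sum_liftRF_mul_taylor_div_eq_zero
    ((Polynomial.map_ne_zero_iff (IsFractionRing.injective _ K)).mpr hb)
    hab.map_fractionRing hρ hL
  have hprimPart : b.primPart ∣ W.map (algebraMap F (MvPolynomial (Fin m) F)) := by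
    refine b.isPrimitive_primPart.dvd_of_fraction_map_dvd_fraction_map (K := K) ?_
    rw [Polynomial.map_map, ← IsScalarTower.algebraMap_eq]
    exact (_root_.map_dvd (mapRingHom _) b.primPart_dvd).trans hbW
  obtain ⟨q, hq⟩ := exists_eq_map_of_dvd_map hW hprimPart
  exact ⟨q, b.content, hq ▸ b.eq_C_content_mul_primPart⟩
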